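/- arXiv:1611.08852 — 3 statements merged into one kernel-verified Lean document; each statement's English description precedes it below -/
import Mathlib

section
/- Let H be a subgroup of a finite group G. The complement G \ H is a non-empty maximal sum-free subset of G if and only if H has index 2 in G. -/
/-! If `G \ H` is sum-free and contains `a`, then every `b ∉ H` has `b + a ∈ H`, so the cosets
`H` and `H + a` cover `G`; conversely, for index two the sum of two elements outside `H` lies in `H`.
Maximality is automatic: for `x ∈ H` and `a ∉ H`, the sum `a + x` again lies outside `H`. -/

namespace AddSubgroup

variable {G : Type*} [AddGroup G] (H : AddSubgroup G)

theorem index_eq_two_iff_exists_notMem_and_add_mem :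
    H.index = 2 ↔ (∃ a, a ∉ H) ∧ ∀ a b, a ∉ H → b ∉ H → a + b ∈ H := by
  constructor
  · intro h
    obtain ⟨a, ha, -⟩ := index_eq_two_iff_exists_notMem_and.1 h
    exact ⟨⟨a, ha⟩, fun a b ha hb => (add_mem_iff_of_index_two h).2 (iff_of_false ha hb)⟩
  · rintro ⟨⟨a, ha⟩, hadd⟩
    refine index_eq_two_iff_exists_notMem_and.2 ⟨a, ha, fun b => ?_⟩
    by_cases hb : b ∈ H
    · exact Or.inr hb
    · exact Or.inl (hadd b a hb ha)

theorem not_sumFree_insert_compl {x a : G} (hx : x ∈ H) (ha : a ∉ H) :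
    ∃ b ∈ insert x (H : Set G)ᶜ, ∃ c ∈ insert x (H : Set G)ᶜ, b + c ∈ insert x (H : Set G)ᶜ :=
  ⟨a, Or.inr ha, x, Or.inl rfl, Or.inr fun hax => ha ((H.add_mem_cancel_right hx).1 hax)⟩

end AddSubgroup

theorem compl_subgroup_maximal_sumFree_iff_index_two_general {G : Type*} [AddGroup G]
    (H : AddSubgroup G) :
    (((H : Set G)ᶜ).Nonempty ∧
      (∀ a ∈ (H : Set G)ᶜ, ∀ b ∈ (H : Set G)ᶜ, a + b ∉ (H : Set G)ᶜ) ∧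
      (∀ x ∈ (H : Set G), ¬ (∀ a ∈ insert x (H : Set G)ᶜ, ∀ b ∈ insert x (H : Set G)ᶜ,
        a + b ∉ insert x (H : Set G)ᶜ))) ↔ H.index = 2 := by
  rw [H.index_eq_two_iff_exists_notMem_and_add_mem]
  simp only [Set.mem_compl_iff, SetLike.mem_coe, not_not]
  constructor
  · rintro ⟨hne, hadd, -⟩
    exact ⟨hne, fun a b ha hb => hadd a ha b hb⟩
  · rintro ⟨⟨a, ha⟩, hadd⟩
    refine ⟨⟨a, ha⟩, fun a ha b hb => hadd a b ha hb, fun x hx hsf => ?_⟩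
    obtain ⟨b, hb, c, hc, hbc⟩ := H.not_sumFree_insert_compl hx ha
    exact hsf b hb c hc hbc

/-- `G \ H` is a nonempty maximal sum-free subset iff `[G : H] = 2`. -/
theorem compl_subgroup_maximal_sumFree_iff_index_two {G : Type*} [AddGroup G] [Finite G]
    (H : AddSubgroup G) :
    (((H : Set G)ᶜ).Nonempty ∧
      (∀ a ∈ (H : Set G)ᶜ, ∀ b ∈ (H : Set G)ᶜ, a + b ∉ (H : Set G)ᶜ) ∧
      (∀ x ∈ (H : Set G), ¬ (∀ a ∈ insert x (H : Set G)ᶜ, ∀ b ∈ insert x (H : Set G)ᶜ,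
        a + b ∉ insert x (H : Set G)ᶜ))) ↔ H.index = 2 :=
  compl_subgroup_maximal_sumFree_iff_index_two_general H
end

section
/- If H is a subgroup of index 2 in a group G, then for every z ∈ H, the set (G \ H) ∪ {z} is not sum-free. -/
@[to_additive]
theorem Subgroup.exists_notMem_mul_eq_of_ne_top {G : Type*} [Group G]
    {H : Subgroup G} (hH : H ≠ ⊤) {z : G} (hz : z ∈ H) :
    ∃ a ∉ H, ∃ b ∉ H, a * b = z := by
  obtain ⟨a, ha⟩ := SetLike.exists_not_mem_of_ne_top H hH
  refine ⟨a, ha, a⁻¹ * z, fun hb => ha ?_, mul_inv_cancel_left a z⟩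
  simpa using H.inv_mem ((H.mul_mem_cancel_right hz).mp hb)

/-- If `[G : H] = 2` then for every `z ∈ H`, `(G \ H) ∪ {z}` is not sum-free. -/
theorem insert_compl_subgroup_not_sumFree {G : Type*} [AddGroup G]
    (H : AddSubgroup G) (h : H.index = 2) :
    ∀ z ∈ (H : Set G), ¬ (∀ a ∈ insert z (H : Set G)ᶜ, ∀ b ∈ insert z (H : Set G)ᶜ,
      a + b ∉ insert z (H : Set G)ᶜ) := by
  intro z hz hsumFree
  have hH : H ≠ ⊤ := fun hH => by simp [hH] at h
  obtain ⟨a, ha, b, hb, rfl⟩ := AddSubgroup.exists_notMem_add_eq_of_ne_top hH hz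
  exact hsumFree a (.inr ha) b (.inr hb) (.inl rfl)
end

section
/- Let G be a finite group such that the set of maximal sum-free subsets of G coincides with the set of complements of maximal subgroups of G. Then G is an elementary abelian 2-group. -/
/-! If `x + x ≠ 0`, the sum-free set `{x + x}` extends to a maximal sum-free set, which by
hypothesis is the complement of a subgroup `H`. Since `x + x ∉ H`, also `x ∉ H`, so `x`, `x` and
`x + x` all lie in `Hᶜ`, which therefore is not sum-free. Hence `G` has exponent two, and a group
of exponent two is abelian. -/

section SumFree

variable {G : Type*}

def IsSumFree [Add G] (A : Set G) : Prop :=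
  ∀ a ∈ A, ∀ b ∈ A, a + b ∉ A

def IsMaximalSumFree [Add G] (A : Set G) : Prop :=
  IsSumFree A ∧ ∀ x ∉ A, ¬ IsSumFree (insert x A)

theorem isSumFree_singleton [AddLeftCancelMonoid G] {a : G} (ha : a ≠ 0) : IsSumFree {a} := by
  intro b hb c hc hbc
  rw [Set.mem_singleton_iff] at hb hc hbc
  subst hb hc
  exact ha (add_eq_left.mp hbc)

theorem isMaximalSumFree_of_maximal [Add G] {A : Set G} (hA : Maximal IsSumFree A) :
    IsMaximalSumFree A :=
  ⟨hA.prop, fun x hx hins => hx (hA.le_of_ge hins (Set.subset_insert x A) (Set.mem_insert x A))⟩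

theorem exists_isMaximalSumFree_superset [Add G] [Finite G] {A : Set G} (hA : IsSumFree A) :
    ∃ B, A ⊆ B ∧ IsMaximalSumFree B :=
  let ⟨B, hAB, hB⟩ := Finite.exists_le_maximal hA
  ⟨B, hAB, isMaximalSumFree_of_maximal hB⟩

theorem AddSubgroup.not_isSumFree_compl [AddGroup G] (H : AddSubgroup G) {x : G}
    (hx : x + x ∉ H) : ¬ IsSumFree (H : Set G)ᶜ := by
  have hxH : x ∉ H := fun hxH => hx (H.add_mem hxH hxH)
  exact fun hH => hH x hxH x hxH hx

end SumFree

/-- If the maximal sum-free subsets of a finite group `G` are exactly the complements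
of maximal subgroups, then `G` is an elementary abelian 2-group. -/
theorem elementary_abelian_of_maximal_sumFree_eq {G : Type*} [AddGroup G] [Finite G]
    (h : {A : Set G | (∀ a ∈ A, ∀ b ∈ A, a + b ∉ A) ∧
        ∀ x ∉ A, ¬ (∀ a ∈ insert x A, ∀ b ∈ insert x A, a + b ∉ insert x A)} =
      {A : Set G | ∃ H : AddSubgroup G, IsCoatom H ∧ A = (H : Set G)ᶜ}) :
    (∀ x y : G, x + y = y + x) ∧ ∀ x : G, x + x = 0 := by
  have add_self : ∀ x : G, x + x = 0 := by
    intro x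
    by_contra hx
    obtain ⟨A, hxA, hA⟩ := exists_isMaximalSumFree_superset (isSumFree_singleton hx)
    have hA' : A ∈ {A : Set G | ∃ H : AddSubgroup G, IsCoatom H ∧ A = (H : Set G)ᶜ} := h ▸ hA
    obtain ⟨H, -, rfl⟩ := hA'
    exact H.not_isSumFree_compl (hxA rfl) hA.1
  have addOrderOf_dvd_two (g : G) : addOrderOf g ∣ 2 := by
    rw [addOrderOf_dvd_iff_nsmul_eq_zero, two_nsmul, add_self]
  exact ⟨AddCommute.of_addOrderOf_dvd_two addOrderOf_dvd_two, add_self⟩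
end
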